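/- Let $(\Omega, \mathcal{H}, \mathbb{E})$ be a sub-linear expectation space and let $\mathcal{H}_1 = \{X \in \mathcal{H} : \lim_{c,d\to\infty} \mathbb{E}[(|X| \wedge d - c)^+] = 0\}$. Then for every $X \in \mathcal{H}_1$ the limit $\breve{\mathbb{E}}[X] = \lim_{c\to\infty} \mathbb{E}[(-c) \vee X \wedge c]$ exists in $\mathbb{R}$, and $(\Omega, \mathcal{H}_1, \breve{\mathbb{E}})$ is itself a sub-linear expectation space: $\mathcal{H}_1$ is a linear subspace, and $\breve{\mathbb{E}}$ is monotone, constant-preserving, sub-additive and positively homogeneous on $\mathcal{H}_1$. -/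

import Mathlib

open Filter MeasureTheory

noncomputable section

/-- The class `C_{l,Lip}` of local Lipschitz functions with polynomial growth. -/
def ClLip {n : ℕ} (φ : (Fin n → ℝ) → ℝ) : Prop :=
  ∃ C : ℝ, 0 < C ∧ ∃ m : ℕ, ∀ x y : Fin n → ℝ,
    |φ x - φ y| ≤ C * (1 + ‖x‖ ^ m + ‖y‖ ^ m) * ‖x - y‖

/-- A sub-linear expectation space `(Ω, H, E)` in the sense of Peng. -/
structure SLE (Ω : Type*) where
  H : Set (Ω → ℝ)
  E : (Ω → ℝ) → ℝ
  const_mem : ∀ c : ℝ, (fun _ => c) ∈ H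
  comp_mem : ∀ (n : ℕ) (φ : (Fin n → ℝ) → ℝ), ClLip φ →
    ∀ X : Fin n → Ω → ℝ, (∀ i, X i ∈ H) → (fun ω => φ (fun i => X i ω)) ∈ H
  mono : ∀ X Y, X ∈ H → Y ∈ H → (∀ ω, X ω ≤ Y ω) → E X ≤ E Y
  isConst : ∀ c : ℝ, E (fun _ => c) = c
  subadd : ∀ X Y, X ∈ H → Y ∈ H → E (fun ω => X ω + Y ω) ≤ E X + E Y
  poshom : ∀ c : ℝ, 0 < c → ∀ X, X ∈ H → E (fun ω => c * X ω) = c * E X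

variable {Ω : Type*}

/-- The conjugate (lower) expectation. -/
def SLE.eps (S : SLE Ω) (X : Ω → ℝ) : ℝ := -S.E (fun ω => -X ω)

/-- `Y` (a `q`-vector) is independent of `X` (a `p`-vector) in Peng's sense. -/
def IndepVec (S : SLE Ω) {p q : ℕ} (X : Fin p → Ω → ℝ) (Y : Fin q → Ω → ℝ) : Prop :=
  ∀ φ : (Fin p → ℝ) → (Fin q → ℝ) → ℝ,
    (∃ K : NNReal, LipschitzWith K (Function.uncurry φ)) →
    (∃ M : ℝ, ∀ x y, |φ x y| ≤ M) →
    S.E (fun ω => φ (fun i => X i ω) (fun j => Y j ω)) =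
      S.E (fun ω => S.E (fun ω' => φ (fun i => X i ω) (fun j => Y j ω')))

/-- A sequence is independent if `X_{i+1}` is independent of `(X_0, …, X_i)`. -/
def IndepSeq (S : SLE Ω) (X : ℕ → Ω → ℝ) : Prop :=
  ∀ i : ℕ, IndepVec S (fun j : Fin (i + 1) => X j.val) (fun _ : Fin 1 => X (i + 1))

/-- The upper capacity `V̂` generated by the sub-linear expectation. -/
def hatV (S : SLE Ω) (A : Set Ω) : ℝ :=
  sInf {r | ∃ ξ ∈ S.H, (∀ ω, Set.indicator A (fun _ => (1 : ℝ)) ω ≤ ξ ω) ∧ S.E ξ = r}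

/-- The countably sub-additive extension `V*` of `V̂`. -/
def Vstar (S : SLE Ω) (A : Set Ω) : ℝ :=
  sInf {r | ∃ B : ℕ → Set Ω, (A ⊆ ⋃ n, B n) ∧
    Summable (fun n => hatV S (B n)) ∧ r = ∑' n, hatV S (B n)}

/-- Truncation `X^{(c)} = (-c) ∨ X ∧ c`. -/
def trunc (c : ℝ) (X : Ω → ℝ) : Ω → ℝ := fun ω => max (-c) (min (X ω) c)

/-- Membership in `H₁ = {X ∈ H : lim_{c,d→∞} E[(|X| ∧ d - c)⁺] = 0}`. -/
def memH1 (S : SLE Ω) (X : Ω → ℝ) : Prop :=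
  X ∈ S.H ∧
    Tendsto (fun cd : ℝ × ℝ => S.E (fun ω => max (min |X ω| cd.2 - cd.1) 0))
      (atTop ×ˢ atTop) (nhds 0)

/-- Two real random variables are identically distributed (Peng's sense). -/
def IdentDist1 (S : SLE Ω) (A B : Ω → ℝ) : Prop :=
  ∀ φ : ℝ → ℝ, (∃ K : NNReal, LipschitzWith K φ) → (∃ M : ℝ, ∀ x, |φ x| ≤ M) →
    S.E (fun ω => φ (A ω)) = S.E (fun ω => φ (B ω))

/-- `m`-dependence: `(X_{n+m+1}, …, X_{n+j})` is independent of `(X_1, …, X_n)`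
(indices here are 0-based: `X 0` plays the role of `X_1`). -/
def MDep (S : SLE Ω) (m : ℕ) (X : ℕ → Ω → ℝ) : Prop :=
  ∀ n : ℕ, 1 ≤ n → ∀ j : ℕ, m + 1 ≤ j →
    IndepVec S (fun i : Fin n => X i.val) (fun i : Fin (j - m) => X (n + m + i.val))

/-- Linear stationarity: `X_1 + ⋯ + X_n ≐ X_{1+p} + ⋯ + X_{n+p}`. -/
def LinStat (S : SLE Ω) (X : ℕ → Ω → ℝ) : Prop :=
  ∀ n : ℕ, 1 ≤ n → ∀ p : ℕ,
    IdentDist1 S (fun ω => ∑ i ∈ Finset.range n, X i ω)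
      (fun ω => ∑ i ∈ Finset.range n, X (p + i) ω)

/-- Condition (CC): `E` is represented by a countable-dimensionally weakly
compact family `P` of probability measures. -/
def CC [MeasurableSpace Ω] (S : SLE Ω) (P : Set (Measure Ω)) : Prop :=
  P.Nonempty ∧ (∀ p ∈ P, IsProbabilityMeasure p) ∧
  (∀ X ∈ S.H, (∃ M : ℝ, ∀ ω, |X ω| ≤ M) → S.E X = ⨆ p ∈ P, ∫ ω, X ω ∂p) ∧
  (∀ Y : ℕ → Ω → ℝ, (∀ n, Y n ∈ S.H ∧ ∃ M : ℝ, ∀ ω, |Y n ω| ≤ M) →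
    ∀ p : ℕ → Measure Ω, (∀ n, p n ∈ P) →
      ∃ k : ℕ → ℕ, StrictMono k ∧ ∃ Q ∈ P,
        ∀ (d : ℕ) (φ : (Fin d → ℝ) → ℝ),
          (∃ K : NNReal, LipschitzWith K φ) → (∃ M : ℝ, ∀ x, |φ x| ≤ M) →
          Tendsto (fun j => ∫ ω, φ (fun i : Fin d => Y i.val ω) ∂(p (k j))) atTop
            (nhds (∫ ω, φ (fun i : Fin d => Y i.val ω) ∂Q)))


/-- The extended sub-linear expectation `Ĕ[X] = lim_{c→∞} E[X^{(c)}]`. -/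
def brE (S : SLE Ω) (X : Ω → ℝ) : ℝ := limUnder atTop (fun c : ℝ => S.E (trunc c X))

/-! Truncations at levels `c ≤ d` differ by at most the tail `(|X| ∧ d - c)⁺`, so on `H₁` the
truncated expectations `E[X^{(c)}]` form a Cauchy family and `Ĕ[X]` exists. Each property of `Ĕ` is
then inherited from the corresponding property of `E` applied to truncations, up to errors given by
tails that vanish on `H₁`; for sub-additivity the error comes from the pointwise bound
`(x + y)^{(c)} ≤ x^{(c)} + y^{(c)} + 2 (|x| ∧ 2c - c/2)⁺ + 2 (|y| ∧ 2c - c/2)⁺`. -/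

open Topology

theorem abs_clamp_le (x : ℝ) {c : ℝ} (hc : 0 ≤ c) : |max (-c) (min x c)| ≤ c :=
  abs_le.2 ⟨le_max_left _ _, max_le (by linarith) (min_le_right _ _)⟩

theorem abs_sub_clamp_le (x c : ℝ) : |x - max (-c) (min x c)| ≤ max (|x| - c) 0 := by
  rw [abs_le]
  rcases abs_cases x with ⟨hx, _⟩ | ⟨hx, _⟩ <;> rw [hx] <;>
    constructor <;> simp only [max_def, min_def] <;> split_ifs <;> linarith

theorem abs_clamp_sub_clamp_le {x c d : ℝ} (hc : 0 ≤ c) (hcd : c ≤ d) :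
    |max (-d) (min x d) - max (-c) (min x c)| ≤ max (min |x| d - c) 0 := by
  rw [abs_le]
  rcases abs_cases x with ⟨hx, _⟩ | ⟨hx, _⟩ <;> rw [hx] <;>
    constructor <;> simp only [max_def, min_def] <;> split_ifs <;> linarith

/- The defect is `(x - xᶜ) + (y - yᶜ) - (x + y - (x + y)ᶜ)` with `zᶜ` the clamp of `z`, and each
term is bounded by `abs_sub_clamp_le`; once `|x|` or `|y|` exceeds `2 * c`, the crude bound `3 * c`
takes over. -/
theorem clamp_add_le {x y c : ℝ} (hc : 0 ≤ c) :
    max (-c) (min (x + y) c) ≤ max (-c) (min x c) + max (-c) (min y c) +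
      2 * max (min |x| (2 * c) - c / 2) 0 + 2 * max (min |y| (2 * c) - c / 2) 0 := by
  have hxy := abs_le.1 (abs_clamp_le (x + y) hc)
  have hx' := abs_le.1 (abs_clamp_le x hc)
  have hy' := abs_le.1 (abs_clamp_le y hc)
  have htx : 0 ≤ max (min |x| (2 * c) - c / 2) 0 := le_max_right _ _
  have hty : 0 ≤ max (min |y| (2 * c) - c / 2) 0 := le_max_right _ _
  by_cases hx : 2 * c ≤ |x|
  · have : 3 * c / 2 ≤ max (min |x| (2 * c) - c / 2) 0 :=
      le_max_of_le_left (by rw [min_eq_right hx]; linarith)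
    linarith
  by_cases hy : 2 * c ≤ |y|
  · have : 3 * c / 2 ≤ max (min |y| (2 * c) - c / 2) 0 :=
      le_max_of_le_left (by rw [min_eq_right hy]; linarith)
    linarith
  rw [min_eq_left (not_le.1 hx).le, min_eq_left (not_le.1 hy).le]
  have rxy := (abs_le.1 (abs_sub_clamp_le (x + y) c)).1
  have rx := (abs_le.1 (abs_sub_clamp_le x c)).2
  have ry := (abs_le.1 (abs_sub_clamp_le y c)).2
  have hs := abs_add_le x y
  have := abs_nonneg x
  have := abs_nonneg y
  clear hxy hx' hy' htx hty hx hy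
  generalize max (-c) (min (x + y) c) = u at *
  generalize max (-c) (min x c) = v at *
  generalize max (-c) (min y c) = w at *
  generalize |x + y| = s at *
  generalize |x| = a at *
  generalize |y| = b at *
  simp only [max_def] at *
  split_ifs at * <;> linarith

theorem max_min_sub_le_add {s a b c d : ℝ} (hs : s ≤ a + b) (hc : 0 ≤ c) :
    max (min s d - c) 0 ≤ max (min a d - c / 2) 0 + max (min b d - c / 2) 0 := by
  simp only [max_def, min_def]; split_ifs <;> linarith

theorem clLip_of_lipschitzWith {n : ℕ} {φ : (Fin n → ℝ) → ℝ} {K : NNReal}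
    (hφ : LipschitzWith K φ) : ClLip φ := by
  refine ⟨K + 1, by positivity, 0, fun x y => ?_⟩
  have h := hφ.dist_le_mul x y
  rw [dist_eq_norm, dist_eq_norm, Real.norm_eq_abs] at h
  have := norm_nonneg (x - y)
  simp only [pow_zero]
  nlinarith

def truncTail (c d : ℝ) (X : Ω → ℝ) : Ω → ℝ := fun ω => max (min |X ω| d - c) 0

namespace SLE

variable (S : SLE Ω)

theorem comp_mem_of_lipschitzWith {n : ℕ} {φ : (Fin n → ℝ) → ℝ} {K : NNReal}
    (hφ : LipschitzWith K φ) {X : Fin n → Ω → ℝ} (hX : ∀ i, X i ∈ S.H) :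
    (fun ω => φ (fun i => X i ω)) ∈ S.H :=
  S.comp_mem n φ (clLip_of_lipschitzWith hφ) X hX

theorem comp_mem_of_lipschitzWith₁ {f : ℝ → ℝ} {K : NNReal} (hf : LipschitzWith K f)
    {X : Ω → ℝ} (hX : X ∈ S.H) : (fun ω => f (X ω)) ∈ S.H :=
  S.comp_mem_of_lipschitzWith (φ := fun x : Fin 1 → ℝ => f (x 0))
    (hf.comp (LipschitzWith.eval 0)) (X := fun _ => X) fun _ => hX

theorem add_mem {X Y : Ω → ℝ} (hX : X ∈ S.H) (hY : Y ∈ S.H) : (fun ω => X ω + Y ω) ∈ S.H := by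
  simpa using S.comp_mem_of_lipschitzWith (φ := fun x : Fin 2 → ℝ => x 0 + x 1)
    ((LipschitzWith.eval 0).add (LipschitzWith.eval 1)) (X := ![X, Y])
    (by simp [Fin.forall_fin_two, hX, hY])

theorem const_mul_mem (c : ℝ) {X : Ω → ℝ} (hX : X ∈ S.H) : (fun ω => c * X ω) ∈ S.H :=
  S.comp_mem_of_lipschitzWith₁ (lipschitzWith_smul c) hX

theorem trunc_mem (c : ℝ) {X : Ω → ℝ} (hX : X ∈ S.H) : trunc c X ∈ S.H :=
  S.comp_mem_of_lipschitzWith₁ ((LipschitzWith.id.min_const c).const_max (-c)) hX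

theorem truncTail_mem (c d : ℝ) {X : Ω → ℝ} (hX : X ∈ S.H) : truncTail c d X ∈ S.H :=
  S.comp_mem_of_lipschitzWith₁
    (((lipschitzWith_one_norm.min_const d).sub (LipschitzWith.const c)).max_const 0) hX

theorem E_nonneg {X : Ω → ℝ} (hX : X ∈ S.H) (h : ∀ ω, 0 ≤ X ω) : 0 ≤ S.E X :=
  S.isConst 0 ▸ S.mono _ _ (S.const_mem 0) hX h

theorem E_le_add_of_le {X Y Z : Ω → ℝ} (hX : X ∈ S.H) (hY : Y ∈ S.H) (hZ : Z ∈ S.H)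
    (h : ∀ ω, X ω ≤ Y ω + Z ω) : S.E X ≤ S.E Y + S.E Z :=
  (S.mono _ _ hX (S.add_mem hY hZ) h).trans (S.subadd Y Z hY hZ)

theorem abs_E_sub_le {X Y Z : Ω → ℝ} (hX : X ∈ S.H) (hY : Y ∈ S.H) (hZ : Z ∈ S.H)
    (h : ∀ ω, |X ω - Y ω| ≤ Z ω) : |S.E X - S.E Y| ≤ S.E Z := by
  refine abs_sub_le_iff.2 ⟨?_, ?_⟩ <;> rw [sub_le_iff_le_add']
  · exact S.E_le_add_of_le hX hY hZ fun ω => by linarith [(abs_le.1 (h ω)).2]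
  · exact S.E_le_add_of_le hY hX hZ fun ω => by linarith [(abs_le.1 (h ω)).1]

theorem abs_E_trunc_sub_le {X : Ω → ℝ} (hX : X ∈ S.H) {c d : ℝ} (hc : 0 ≤ c) (hcd : c ≤ d) :
    |S.E (trunc d X) - S.E (trunc c X)| ≤ S.E (truncTail c d X) :=
  S.abs_E_sub_le (S.trunc_mem d hX) (S.trunc_mem c hX) (S.truncTail_mem c d hX)
    fun _ => abs_clamp_sub_clamp_le hc hcd

theorem tendsto_E_truncTail {X : Ω → ℝ} (hX : memH1 S X) :
    Tendsto (fun cd : ℝ × ℝ => S.E (truncTail cd.1 cd.2 X)) (atTop ×ˢ atTop) (𝓝 0) :=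
  hX.2

theorem tendsto_E_trunc {X : Ω → ℝ} (hX : memH1 S X) :
    Tendsto (fun c => S.E (trunc c X)) atTop (𝓝 (brE S X)) := by
  have htail := S.tendsto_E_truncTail hX
  have hbound : Tendsto (fun cd : ℝ × ℝ =>
      S.E (truncTail cd.1 cd.2 X) + S.E (truncTail cd.2 cd.1 X)) (atTop ×ˢ atTop) (𝓝 0) := by
    simpa using htail.add (htail.comp tendsto_prod_swap)
  refine tendsto_nhds_limUnder (cauchy_map_iff_exists_tendsto.1 ?_)
  rw [cauchy_map_iff, tendsto_uniformity_iff_dist_tendsto_zero]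
  refine ⟨inferInstance, squeeze_zero' (Eventually.of_forall fun _ => dist_nonneg) ?_ hbound⟩
  filter_upwards [(eventually_ge_atTop 0).prod_mk (eventually_ge_atTop 0)] with ⟨c, d⟩ ⟨hc, hd⟩
  have hcd := S.E_nonneg (S.truncTail_mem c d hX.1) fun _ => le_max_right _ _
  have hdc := S.E_nonneg (S.truncTail_mem d c hX.1) fun _ => le_max_right _ _
  rw [Real.dist_eq]
  rcases le_total c d with h | h
  · rw [abs_sub_comm]; linarith [S.abs_E_trunc_sub_le hX.1 hc h]
  · linarith [S.abs_E_trunc_sub_le hX.1 hd h]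

theorem E_trunc_add_le {X Y : Ω → ℝ} (hX : X ∈ S.H) (hY : Y ∈ S.H) {c : ℝ} (hc : 0 ≤ c) :
    S.E (trunc c fun ω => X ω + Y ω) ≤ S.E (trunc c X) + S.E (trunc c Y) +
      (2 * S.E (truncTail (c / 2) (2 * c) X) + 2 * S.E (truncTail (c / 2) (2 * c) Y)) := by
  have htX := S.truncTail_mem (c / 2) (2 * c) hX
  have htY := S.truncTail_mem (c / 2) (2 * c) hY
  have h2tX := S.const_mul_mem 2 htX
  have h2tY := S.const_mul_mem 2 htY
  calc S.E (trunc c fun ω => X ω + Y ω)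
      ≤ S.E (fun ω => trunc c X ω + trunc c Y ω) +
          S.E (fun ω => 2 * truncTail (c / 2) (2 * c) X ω + 2 * truncTail (c / 2) (2 * c) Y ω) :=
        S.E_le_add_of_le (S.trunc_mem c (S.add_mem hX hY))
          (S.add_mem (S.trunc_mem c hX) (S.trunc_mem c hY)) (S.add_mem h2tX h2tY)
          fun ω => by
            simp only [trunc, truncTail]
            linarith [clamp_add_le (x := X ω) (y := Y ω) hc]
    _ ≤ S.E (trunc c X) + S.E (trunc c Y) +
          (S.E (fun ω => 2 * truncTail (c / 2) (2 * c) X ω) +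
            S.E (fun ω => 2 * truncTail (c / 2) (2 * c) Y ω)) :=
        add_le_add (S.subadd _ _ (S.trunc_mem c hX) (S.trunc_mem c hY)) (S.subadd _ _ h2tX h2tY)
    _ = _ := by rw [S.poshom 2 two_pos _ htX, S.poshom 2 two_pos _ htY]

theorem memH1_const (a : ℝ) : memH1 S fun _ => a := by
  refine ⟨S.const_mem a, tendsto_const_nhds.congr' ?_⟩
  filter_upwards [tendsto_fst.eventually (eventually_ge_atTop |a|)] with cd hcd
  have : (fun _ : Ω => max (min |a| cd.2 - cd.1) 0) = fun _ => 0 :=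
    funext fun _ => max_eq_right (by linarith [min_le_left |a| cd.2])
  rw [this, S.isConst]

theorem memH1_add {X Y : Ω → ℝ} (hX : memH1 S X) (hY : memH1 S Y) :
    memH1 S fun ω => X ω + Y ω := by
  have hXY := S.add_mem hX.1 hY.1
  have hhalf : Tendsto (fun cd : ℝ × ℝ => (cd.1 / 2, cd.2)) (atTop ×ˢ atTop) (atTop ×ˢ atTop) :=
    (tendsto_fst.atTop_div_const two_pos).prodMk tendsto_snd
  have hlim : Tendsto (fun cd : ℝ × ℝ =>
      S.E (truncTail (cd.1 / 2) cd.2 X) + S.E (truncTail (cd.1 / 2) cd.2 Y))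
      (atTop ×ˢ atTop) (𝓝 0) := by
    simpa using ((S.tendsto_E_truncTail hX).comp hhalf).add
      ((S.tendsto_E_truncTail hY).comp hhalf)
  refine ⟨hXY, squeeze_zero' (Eventually.of_forall fun cd =>
    S.E_nonneg (S.truncTail_mem cd.1 cd.2 hXY) fun _ => le_max_right _ _) ?_ hlim⟩
  filter_upwards [tendsto_fst.eventually (eventually_ge_atTop 0)] with cd hc
  exact S.E_le_add_of_le (S.truncTail_mem _ _ hXY) (S.truncTail_mem _ _ hX.1)
    (S.truncTail_mem _ _ hY.1) fun ω => max_min_sub_le_add (abs_add_le _ _) hc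

theorem memH1_const_mul (a : ℝ) {X : Ω → ℝ} (hX : memH1 S X) : memH1 S fun ω => a * X ω := by
  rcases eq_or_ne a 0 with rfl | ha
  · simpa only [zero_mul] using S.memH1_const 0
  have ha' : 0 < |a| := abs_pos.2 ha
  have hscale : Tendsto (fun cd : ℝ × ℝ => (cd.1 / |a|, cd.2 / |a|))
      (atTop ×ˢ atTop) (atTop ×ˢ atTop) :=
    (tendsto_fst.atTop_div_const ha').prodMk (tendsto_snd.atTop_div_const ha')
  have hlim := ((S.tendsto_E_truncTail hX).comp hscale).const_mul |a|
  rw [mul_zero] at hlim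
  refine ⟨S.const_mul_mem a hX.1, hlim.congr fun cd => ?_⟩
  rw [Function.comp_apply, ← S.poshom _ ha' _ (S.truncTail_mem _ _ hX.1)]
  congr 1
  funext ω
  rw [truncTail, abs_mul, mul_max_of_nonneg _ _ ha'.le, mul_sub, mul_min_of_nonneg _ _ ha'.le,
    mul_zero, mul_div_cancel₀ _ ha'.ne', mul_div_cancel₀ _ ha'.ne']

theorem brE_mono {X Y : Ω → ℝ} (hX : memH1 S X) (hY : memH1 S Y) (h : ∀ ω, X ω ≤ Y ω) :
    brE S X ≤ brE S Y :=
  le_of_tendsto_of_tendsto' (S.tendsto_E_trunc hX) (S.tendsto_E_trunc hY) fun c =>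
    S.mono _ _ (S.trunc_mem c hX.1) (S.trunc_mem c hY.1) fun ω =>
      max_le_max le_rfl (min_le_min (h ω) le_rfl)

theorem brE_const (a : ℝ) : brE S (fun _ => a) = a := by
  refine Tendsto.limUnder_eq (tendsto_const_nhds.congr' ?_)
  filter_upwards [eventually_ge_atTop |a|] with c hc
  obtain ⟨hac, hca⟩ := abs_le.1 hc
  have : trunc c (fun _ : Ω => a) = fun _ => a :=
    funext fun _ => by rw [trunc, min_eq_left hca, max_eq_right hac]
  rw [this, S.isConst]

theorem brE_const_mul {a : ℝ} (ha : 0 < a) {X : Ω → ℝ} (hX : memH1 S X) :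
    brE S (fun ω => a * X ω) = a * brE S X := by
  refine Tendsto.limUnder_eq (((S.tendsto_E_trunc hX).comp
    (tendsto_id.atTop_div_const ha)).const_mul a |>.congr fun c => ?_)
  rw [Function.comp_apply, id, ← S.poshom a ha _ (S.trunc_mem _ hX.1)]
  congr 1
  funext ω
  rw [trunc, trunc, mul_max_of_nonneg _ _ ha.le, mul_min_of_nonneg _ _ ha.le, mul_neg,
    mul_div_cancel₀ _ ha.ne']

theorem brE_add_le {X Y : Ω → ℝ} (hX : memH1 S X) (hY : memH1 S Y) :
    brE S (fun ω => X ω + Y ω) ≤ brE S X + brE S Y := by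
  have htail : ∀ {Z : Ω → ℝ}, memH1 S Z →
      Tendsto (fun c => S.E (truncTail (c / 2) (2 * c) Z)) atTop (𝓝 0) := fun hZ =>
    (S.tendsto_E_truncTail hZ).comp
      ((tendsto_id.atTop_div_const two_pos).prodMk (tendsto_id.const_mul_atTop two_pos))
  have hlim := ((S.tendsto_E_trunc hX).add (S.tendsto_E_trunc hY)).add
    (((htail hX).const_mul 2).add ((htail hY).const_mul 2))
  rw [mul_zero, add_zero, add_zero] at hlim
  refine le_of_tendsto_of_tendsto (S.tendsto_E_trunc (S.memH1_add hX hY)) hlim ?_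
  filter_upwards [eventually_ge_atTop 0] with c hc
  exact S.E_trunc_add_le hX.1 hY.1 hc

end SLE

/-- Lemma 3.6: `(Ω, H₁, Ĕ)` is a sub-linear expectation space. -/
theorem H1_sublinear_space (S : SLE Ω) :
    (∀ X : Ω → ℝ, memH1 S X →
      ∃ e : ℝ, Tendsto (fun c : ℝ => S.E (trunc c X)) atTop (nhds e) ∧ brE S X = e) ∧
    memH1 S (fun _ => (0 : ℝ)) ∧
    (∀ X Y : Ω → ℝ, memH1 S X → memH1 S Y → memH1 S (fun ω => X ω + Y ω)) ∧
    (∀ (c : ℝ) (X : Ω → ℝ), memH1 S X → memH1 S (fun ω => c * X ω)) ∧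
    (∀ X Y : Ω → ℝ, memH1 S X → memH1 S Y → (∀ ω, X ω ≤ Y ω) → brE S X ≤ brE S Y) ∧
    (∀ c : ℝ, brE S (fun _ => c) = c) ∧
    (∀ X Y : Ω → ℝ, memH1 S X → memH1 S Y →
      brE S (fun ω => X ω + Y ω) ≤ brE S X + brE S Y) ∧
    (∀ c : ℝ, 0 < c → ∀ X : Ω → ℝ, memH1 S X →
      brE S (fun ω => c * X ω) = c * brE S X) :=
  ⟨fun _ hX => ⟨_, S.tendsto_E_trunc hX, rfl⟩, S.memH1_const 0,
    fun _ _ => S.memH1_add, fun c _ => S.memH1_const_mul c, fun _ _ => S.brE_mono,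
    S.brE_const, fun _ _ => S.brE_add_le, fun _ hc _ => S.brE_const_mul hc⟩

end
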